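/- arXiv:2502.06202 — 2 statements merged into one kernel-verified Lean document; each statement's English description precedes it below -/
import Mathlib

section
/- Let g, N ∈ ℕ with gcd(g, N) = 1 and g/N = [a_0; a_1, …, a_ℓ] with a_ℓ = 1, K = max(a_1, …, a_ℓ). Let X = T(ℤ²) with T having rows (1/N, 0) and (g/N, 1). Then the mesh ratio of the lattice satisfies ρ_∞(X; ℝ²) ≤ 2(K+2). -/
/-- The value of a finite continued fraction `[a₀; a₁, …, a_ℓ]` given as a list of
partial quotients. -/
noncomputable def cfVal : List ℕ → ℝ
  | [] => 0
  | [a] => (a : ℝ)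
  | a :: rest => (a : ℝ) + 1 / cfVal rest

/-- The planar lattice `X = T(ℤ²)` with `T` having rows `(1/N, 0)` and `(g/N, 1)`:
`X = { (t/N, tg/N − u) : t, u ∈ ℤ }`. -/
def rank1Latt (g N : ℕ) : Set (Fin 2 → ℝ) :=
  {x | ∃ t u : ℤ, x = ![(t : ℝ) / N, (t : ℝ) * g / N - u]}

/-- Covering radius in the `ℓ_∞` norm of a point set `P` with respect to a domain `Ω`. -/
noncomputable def covRadInf (P Ω : Set (Fin 2 → ℝ)) : ℝ :=
  ⨆ x : Ω, ⨅ y : P, dist (x : Fin 2 → ℝ) (y : Fin 2 → ℝ)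

/-- Separation radius in the `ℓ_∞` norm of a point set `P`. -/
noncomputable def sepRadInf (P : Set (Fin 2 → ℝ)) : ℝ :=
  sInf {r : ℝ | ∃ x ∈ P, ∃ y ∈ P, x ≠ y ∧ r = dist x y} / 2


def cfA (a : ℕ) : Matrix (Fin 2) (Fin 2) ℤ := !![(a:ℤ),1;1,0]
def cfM (l : List ℕ) : Matrix (Fin 2) (Fin 2) ℤ := (l.map cfA).prod

lemma cfM_nil : cfM [] = 1 := rfl
lemma cfM_cons (a : ℕ) (l : List ℕ) : cfM (a :: l) = cfA a * cfM l := by simp [cfM]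
lemma cfM_append (l1 l2 : List ℕ) : cfM (l1 ++ l2) = cfM l1 * cfM l2 := by simp [cfM]
lemma cfA_det (a : ℕ) : (cfA a).det = -1 := by simp [cfA, Matrix.det_fin_two_of]
lemma cfM_det (l : List ℕ) : (cfM l).det = (-1)^l.length := by
  induction l with
  | nil => simp [cfM_nil]
  | cons a l ih => rw [cfM_cons, Matrix.det_mul, cfA_det, ih, List.length_cons]; ring

lemma cfM_det' (l : List ℕ) :
    cfM l 0 0 * cfM l 1 1 - cfM l 0 1 * cfM l 1 0 = (-1)^l.length := by
  rw [← cfM_det, Matrix.det_fin_two]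

-- entry lemmas for multiplication
lemma mul_cfA (M : Matrix (Fin 2) (Fin 2) ℤ) (a : ℕ) :
    M * cfA a = !![M 0 0 * a + M 0 1, M 0 0; M 1 0 * a + M 1 1, M 1 0] := by
  ext i j
  fin_cases i <;> fin_cases j <;>
    simp [cfA, Matrix.mul_apply, Fin.sum_univ_two]

lemma cfA_mul (M : Matrix (Fin 2) (Fin 2) ℤ) (a : ℕ) :
    cfA a * M = !![a * M 0 0 + M 1 0, a * M 0 1 + M 1 1; M 0 0, M 0 1] := by
  ext i j
  fin_cases i <;> fin_cases j <;>
    simp [cfA, Matrix.mul_apply, Fin.sum_univ_two]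

lemma cfM_nonneg (l : List ℕ) : ∀ i j, 0 ≤ cfM l i j := by
  induction l with
  | nil => intro i j; fin_cases i <;> fin_cases j <;> simp [cfM_nil]
  | cons a l ih =>
    intro i j
    rw [cfM_cons, cfA_mul]
    fin_cases i <;> fin_cases j <;> simp <;>
      first
      | exact ih _ _
      | exact add_nonneg (mul_nonneg (Int.natCast_nonneg a) (ih _ _)) (ih _ _)

lemma cfM_pos : ∀ (l : List ℕ), l ≠ [] → (∀ a ∈ l, 1 ≤ a) → 1 ≤ cfM l 0 0 ∧ 1 ≤ cfM l 1 0 := by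
  intro l
  induction l with
  | nil => intro h; exact absurd rfl h
  | cons a rest ih =>
    intro _ hp
    match rest with
    | [] =>
      have : (1:ℤ) ≤ a := by exact_mod_cast hp a (by simp)
      constructor <;> simp [cfM_cons, cfM_nil, cfA] <;> omega
    | b :: l' =>
      have hp' : ∀ x ∈ b :: l', 1 ≤ x := fun x hx => hp x (List.mem_cons_of_mem a hx)
      obtain ⟨h00, h10⟩ := ih (by simp) hp'
      have ha : (1:ℤ) ≤ a := by exact_mod_cast hp a (by simp)
      rw [cfM_cons, cfA_mul]
      have hnn := cfM_nonneg (b :: l') 1 0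
      constructor
      · show (1:ℤ) ≤ ↑a * cfM (b :: l') 0 0 + cfM (b :: l') 1 0
        nlinarith
      · simpa using h00

lemma cfVal_eq : ∀ (l : List ℕ), l ≠ [] → (∀ a ∈ l.tail, 1 ≤ a) →
    0 < cfM l 1 0 ∧ cfVal l = (cfM l 0 0 : ℝ) / (cfM l 1 0) := by
  intro l
  induction l with
  | nil => intro h; exact absurd rfl h
  | cons a rest ih =>
    intro _ hp
    match rest with
    | [] =>
      refine ⟨by simp [cfM_cons, cfM_nil, cfA], ?_⟩
      simp [cfVal, cfM_cons, cfM_nil, cfA]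
    | b :: l' =>
      have hp' : ∀ x ∈ (b :: l').tail, 1 ≤ x := fun x hx => hp x (List.mem_cons_of_mem b hx)
      obtain ⟨h10, hval⟩ := ih (by simp) hp'
      obtain ⟨h00, _⟩ := cfM_pos (b :: l') (by simp) (by simpa using hp)
      rw [cfM_cons, cfA_mul]
      have hval' : cfVal (a :: b :: l') = a + 1 / cfVal (b :: l') := rfl
      constructor
      · simpa using (show (0:ℤ) < cfM (b :: l') 0 0 by omega)
      · rw [hval', hval]
        have h00R : (0:ℝ) < (cfM (b :: l') 0 0 : ℝ) := by exact_mod_cast lt_of_lt_of_le one_pos h00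
        have h10R : (0:ℝ) < (cfM (b :: l') 1 0 : ℝ) := by exact_mod_cast h10
        show _ = ((↑(↑a * cfM (b :: l') 0 0 + cfM (b :: l') 1 0) : ℝ)) / ((cfM (b :: l') 0 0 : ℤ) : ℝ)
        push_cast
        field_simp

def qf (L : List ℕ) (j : ℕ) : ℤ := cfM (L.take (j+1)) 1 0
def qf' (L : List ℕ) (j : ℕ) : ℤ := cfM (L.take (j+1)) 1 1
def pf (L : List ℕ) (j : ℕ) : ℤ := cfM (L.take (j+1)) 0 0
def pf' (L : List ℕ) (j : ℕ) : ℤ := cfM (L.take (j+1)) 0 1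
def xf (L : List ℕ) (j : ℕ) : ℤ := cfM (L.drop j) 0 0
def xf' (L : List ℕ) (j : ℕ) : ℤ := cfM (L.drop j) 1 0

lemma take_step (L : List ℕ) (j : ℕ) (hj : j < L.length) :
    cfM (L.take (j+1)) = cfM (L.take j) * cfA (L.get ⟨j, hj⟩) := by
  rw [List.take_succ, cfM_append]
  congr 1
  have : L[j]? = some (L.get ⟨j, hj⟩) := by
    simp [List.getElem?_eq_getElem hj]
  simp [this, cfM_cons, cfM]

lemma drop_step (L : List ℕ) (j : ℕ) (hj : j < L.length) :
    cfM (L.drop j) = cfA (L.get ⟨j, hj⟩) * cfM (L.drop (j+1)) := by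
  conv_lhs => rw [List.drop_eq_getElem_cons hj]
  rw [cfM_cons, List.get_eq_getElem]

lemma pq_succ (L : List ℕ) (j : ℕ) (hj : j + 1 < L.length) :
    qf L (j+1) = qf L j * (L.get ⟨j+1, hj⟩) + qf' L j ∧ qf' L (j+1) = qf L j ∧
    pf L (j+1) = pf L j * (L.get ⟨j+1, hj⟩) + pf' L j ∧ pf' L (j+1) = pf L j := by
  have h := take_step L (j+1) hj
  rw [mul_cfA] at h
  refine ⟨?_, ?_, ?_, ?_⟩ <;> simp [qf, qf', pf, pf', h]

lemma xf_succ (L : List ℕ) (j : ℕ) (hj : j < L.length) :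
    xf L j = (L.get ⟨j, hj⟩) * xf L (j+1) + xf' L (j+1) ∧ xf' L j = xf L (j+1) := by
  have h := drop_step L j hj
  rw [cfA_mul] at h
  constructor <;> simp [xf, xf', h]

lemma xf_large (L : List ℕ) (j : ℕ) (hj : L.length ≤ j) : xf L j = 1 ∧ xf' L j = 0 := by
  have : L.drop j = [] := List.drop_eq_nil_of_le hj
  constructor <;> simp [xf, xf', this, cfM] <;> rfl

section
variable (L : List ℕ)

lemma q_base (a : ℕ) (l : List ℕ) :
    qf (a::l) 0 = 1 ∧ qf' (a::l) 0 = 0 ∧ pf (a::l) 0 = a ∧ pf' (a::l) 0 = 1 := by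
  have h : (a::l).take 1 = [a] := rfl
  have h2 : cfM [a] = cfA a := by simp [cfM]
  refine ⟨?_, ?_, ?_, ?_⟩ <;> simp [qf, qf', pf, pf', h, h2, cfA]

lemma q_pos (htail : ∀ (j : ℕ) (hj : j < L.length), 1 ≤ j → 1 ≤ L.get ⟨j, hj⟩)
    (hL : 1 ≤ L.length) :
    ∀ j, j + 1 ≤ L.length → 1 ≤ qf L j ∧ 0 ≤ qf' L j ∧ qf' L j ≤ qf L j := by
  intro j
  induction j with
  | zero =>
    intro _
    match L, hL with
    | a :: l, _ => exact ⟨by simp [q_base], by simp [q_base], by simp [q_base]⟩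
  | succ j ih =>
    intro hj
    have hj' : j + 1 < L.length := hj
    obtain ⟨h1, h2, h3⟩ := ih (by omega)
    obtain ⟨e1, e2, _, _⟩ := pq_succ L j hj'
    have ha : (1:ℤ) ≤ (L.get ⟨j+1, hj'⟩ : ℤ) := by
      exact_mod_cast htail (j+1) hj' (by omega)
    refine ⟨?_, ?_, ?_⟩
    · rw [e1]; nlinarith
    · rw [e2]; omega
    · rw [e1, e2]; nlinarith

lemma x_facts (htail : ∀ (j : ℕ) (hj : j < L.length), 1 ≤ j → 1 ≤ L.get ⟨j, hj⟩) :
    ∀ j, 1 ≤ j → 1 ≤ xf L j ∧ xf L (j+1) ≤ xf L j := by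
  suffices h : ∀ d j, L.length ≤ j + d → 1 ≤ j → 1 ≤ xf L j ∧ xf L (j+1) ≤ xf L j by
    intro j hj; exact h L.length j (by omega) hj
  intro d
  induction d with
  | zero =>
    intro j hj _
    have h1 := xf_large L j (by omega)
    have h2 := xf_large L (j+1) (by omega)
    rw [h1.1, h2.1]; omega
  | succ d ih =>
    intro j hj hj1
    by_cases hlt : j < L.length
    · obtain ⟨e1, _⟩ := xf_succ L j hlt
      have ha : (1:ℤ) ≤ (L.get ⟨j, hlt⟩ : ℤ) := by exact_mod_cast htail j hlt hj1
      have hx1 : 1 ≤ xf L (j+1) := (ih (j+1) (by omega) (by omega)).1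
      have hx2 : 0 ≤ xf' L (j+1) := cfM_nonneg _ 1 0
      constructor <;> rw [e1] <;> nlinarith
    · have h1 := xf_large L j (by omega)
      have h2 := xf_large L (j+1) (by omega)
      rw [h1.1, h2.1]; omega

lemma key_id (i : ℕ) (hi : i + 2 ≤ L.length) :
    (cfM L 0 0) * qf L i - (cfM L 1 0) * pf L i = (-1)^i * xf L (i+2) := by
  have hsplit : cfM L = cfM (L.take (i+2)) * cfM (L.drop (i+2)) := by
    rw [← cfM_append, List.take_append_drop]
  set B := cfM (L.take (i+2)) with hB
  set C := cfM (L.drop (i+2)) with hC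
  have hlen : (L.take (i+2)).length = i+2 := by simp; omega
  have hdet : B 0 0 * B 1 1 - B 0 1 * B 1 0 = (-1)^(i+2) := by
    rw [hB, cfM_det', hlen]
  obtain ⟨_, e2, _, e4⟩ := pq_succ L i (by omega)
  have hB11 : B 1 1 = qf L i := e2
  have hB01 : B 0 1 = pf L i := e4
  have hL00 : cfM L 0 0 = B 0 0 * C 0 0 + B 0 1 * C 1 0 := by
    rw [hsplit, Matrix.mul_apply, Fin.sum_univ_two]
  have hL10 : cfM L 1 0 = B 1 0 * C 0 0 + B 1 1 * C 1 0 := by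
    rw [hsplit, Matrix.mul_apply, Fin.sum_univ_two]
  have hx : xf L (i+2) = C 0 0 := rfl
  have hpow : ((-1:ℤ))^(i+2) = (-1)^i := by ring
  rw [hL00, hL10, ← hB11, ← hB01, hx, ← hpow]
  linear_combination C 0 0 * hdet
end

lemma helper1 (a q q' : ℤ) (ha1 : 1 ≤ a) (hq1 : 1 ≤ q) (hq' : 0 ≤ q') :
    q ≤ q * a + q' := by nlinarith
lemma helper2 (K a q q' S : ℤ) (ha : a ≤ K) (hq1 : 1 ≤ q) (h2 : 0 ≤ q') (h3 : q' ≤ q)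
    (hqS : q ≤ S) (hK : 0 ≤ K) : q * a + q' ≤ (K+1) * S := by nlinarith
lemma helper3 (K a x x' Q : ℤ) (ha : a ≤ K) (hx' : x' ≤ x) (hx1 : 1 ≤ x)
    (hxQ : x ≤ Q) (hK : 0 ≤ K) : a * x + x' ≤ (K+1) * Q := by nlinarith
lemma helper4 (K a q q' : ℤ) (ha1 : 1 ≤ a) (hq1 : 1 ≤ q) (hq' : 0 ≤ q') (hK : 0 ≤ K) :
    1 ≤ (K+1) * (q * a + q') := by
  have h1 : 1 ≤ q * a + q' := by nlinarith
  nlinarith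

lemma core (g N : ℕ) (hN : 0 < N) (hgcd : Nat.Coprime g N) (a₀ : ℕ) (as : List ℕ)
    (has : as ≠ []) (hpos : ∀ a ∈ as, 1 ≤ a)
    (hcf : (g : ℝ)/N = cfVal (a₀ :: as)) (K : ℕ) (hKb : ∀ a ∈ as, a ≤ K) :
    ∃ Q1 Q2 S1 S2 P1 P2 ε : ℤ, (ε = 1 ∨ ε = -1) ∧
      (g:ℤ)*Q1 - N*P1 = ε*S1 ∧ (g:ℤ)*Q2 - N*P2 = -(ε*S2) ∧ Q1*P2 - Q2*P1 = ε ∧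
      1 ≤ Q1 ∧ Q1 ≤ Q2 ∧ 0 ≤ S2 ∧ S2 ≤ S1 ∧ 1 ≤ S1 ∧
      Q2 ≤ ((K:ℤ)+1)*S1 ∧ S1 ≤ ((K:ℤ)+1)*Q2 := by
  classical
  set L := a₀ :: as with hL
  set n := as.length with hn
  have hn1 : 1 ≤ n := by
    rw [hn]; cases as with
    | nil => exact absurd rfl has
    | cons _ _ => simp
  have hLlen : L.length = n + 1 := by simp [hL, hn]
  have htail : ∀ (j : ℕ) (hj : j < L.length), 1 ≤ j → 1 ≤ L.get ⟨j, hj⟩ := by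
    intro j hj hj1
    match j, hj1 with
    | j+1, _ =>
      have : L.get ⟨j+1, hj⟩ = as.get ⟨j, by simp [hLlen] at hj; omega⟩ := rfl
      rw [this]; exact hpos _ (as.get_mem _)
  have hKbd : ∀ (j : ℕ) (hj : j < L.length), 1 ≤ j → (L.get ⟨j, hj⟩ : ℤ) ≤ (K:ℤ) := by
    intro j hj hj1
    match j, hj1 with
    | j+1, _ =>
      have : L.get ⟨j+1, hj⟩ = as.get ⟨j, by simp [hLlen] at hj; omega⟩ := rfl
      rw [this]; exact_mod_cast hKb _ (as.get_mem _)
  -- identify cfM L entries with g and N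
  obtain ⟨h10pos, hval⟩ := cfVal_eq L (by simp [hL]) (by simpa [hL] using hpos)
  have hNR : ((N:ℝ)) ≠ 0 := by positivity
  have h10R : ((cfM L 1 0 : ℤ) : ℝ) ≠ 0 := by
    exact_mod_cast ne_of_gt h10pos
  rw [hval, div_eq_div_iff hNR h10R] at hcf
  have hcross : (g:ℤ) * cfM L 1 0 = cfM L 0 0 * (N:ℤ) := by exact_mod_cast hcf
  have hdetL := cfM_det' L
  have hsq : ((-1:ℤ)^L.length) * ((-1:ℤ)^L.length) = 1 := by
    rw [← pow_add]
    exact Even.neg_one_pow ⟨L.length, rfl⟩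
  have hcop1 : IsCoprime (cfM L 0 0) (cfM L 1 0) := by
    refine ⟨cfM L 1 1 * (-1)^L.length, -(cfM L 0 1)*(-1)^L.length, ?_⟩
    linear_combination ((-1:ℤ)^L.length) * hdetL + hsq
  have hcop2 : IsCoprime (g:ℤ) (N:ℤ) := Nat.isCoprime_iff_coprime.mpr hgcd
  have hd1 : cfM L 1 0 ∣ (N:ℤ) := by
    refine hcop1.symm.dvd_of_dvd_mul_right ⟨(g:ℤ), ?_⟩
    linear_combination -hcross
  have hd2 : (N:ℤ) ∣ cfM L 1 0 := by
    refine hcop2.symm.dvd_of_dvd_mul_left ⟨cfM L 0 0, by linear_combination hcross⟩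
  have h10N : cfM L 1 0 = (N:ℤ) := Int.dvd_antisymm (le_of_lt h10pos) (by positivity) hd1 hd2
  have h00g : cfM L 0 0 = (g:ℤ) := by
    have h := hcross
    rw [h10N] at h
    have hNne : (N:ℤ) ≠ 0 := by exact_mod_cast Nat.pos_iff_ne_zero.mp hN
    exact (mul_right_cancel₀ hNne h.symm)
  -- basic sequence facts
  have hq := q_pos L htail (by omega)
  have hx := x_facts L htail
  set s : ℕ → ℤ := fun j => if j < n then xf L (j+2) else 0 with hs
  have hex : ∃ j, 1 ≤ j ∧ j ≤ n ∧ s j ≤ qf L j := by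
    refine ⟨n, hn1, le_refl n, ?_⟩
    have h0 : s n = 0 := by simp [hs]
    rw [h0]
    exact le_trans zero_le_one (hq n (by omega)).1
  have : DecidablePred (fun j => 1 ≤ j ∧ j ≤ n ∧ s j ≤ qf L j) :=
    Classical.decPred _
  have hspec := Nat.find_spec hex
  have hmin : ∀ m, m < Nat.find hex → ¬(1 ≤ m ∧ m ≤ n ∧ s m ≤ qf L m) := fun m hm =>
    Nat.find_min hex hm
  obtain ⟨i, hij⟩ : ∃ i, Nat.find hex = i + 1 := ⟨Nat.find hex - 1, by omega⟩
  rw [hij] at hspec hmin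
  obtain ⟨hj₀1, hj₀n, hj₀s⟩ := hspec
  clear hij this
  have hin : i < n := by omega
  have hi2 : i + 2 ≤ L.length := by omega
  have hlt1 : i + 1 < L.length := by omega
  have hlt2' : i + 2 ≤ L.length := by omega
  have hcross1 : qf L i ≤ xf L (i+2) := by
    by_cases hi0 : i = 0
    · rw [hi0]
      have hq0 : qf L 0 = 1 := by
        have := q_base a₀ as
        simpa [hL] using this.1
      rw [hq0]
      exact (hx 2 (by omega)).1
    · have hmin' := hmin i (by omega)
      push_neg at hmin'
      have := hmin' (by omega) (by omega)
      have hsi : s i = xf L (i+2) := by simp [hs, hin]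
      rw [hsi] at this
      omega
  have hsj : s (i+1) ≤ qf L (i+1) := hj₀s
  -- the witnesses
  refine ⟨qf L i, qf L (i+1), xf L (i+2), s (i+1), pf L i, pf L (i+1), (-1)^i,
    ?_, ?_, ?_, ?_, ?_, ?_, ?_, ?_, ?_, ?_, ?_⟩
  · rcases Nat.even_or_odd i with h | h
    · exact Or.inl h.neg_one_pow
    · exact Or.inr h.neg_one_pow
  · -- e1
    have := key_id L i hi2
    rw [h00g, h10N] at this
    exact this
  · -- e2
    by_cases hi1 : i + 1 < n
    · have := key_id L (i+1) (by omega)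
      rw [h00g, h10N] at this
      have hsv : s (i+1) = xf L (i+3) := by simp [hs, hi1]
      rw [hsv, this]
      ring
    · have hi1n : i + 1 = n := by omega
      have hsv : s (i+1) = 0 := by simp [hs, hi1]
      have htk : L.take (n+1) = L := by rw [← hLlen, List.take_length]
      have hqn : qf L (i+1) = (N:ℤ) := by rw [hi1n]; unfold qf; rw [htk, h10N]
      have hpn : pf L (i+1) = (g:ℤ) := by rw [hi1n]; unfold pf; rw [htk, h00g]
      rw [hsv, hqn, hpn]
      ring
  · -- e3
    have hlen : (L.take (i+2)).length = i+2 := by simp; omega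
    have hdet := cfM_det' (L.take (i+2))
    rw [hlen] at hdet
    obtain ⟨_, e2, _, e4⟩ := pq_succ L i (by omega)
    have hB11 : cfM (L.take (i+2)) 1 1 = qf L i := e2
    have hB01 : cfM (L.take (i+2)) 0 1 = pf L i := e4
    have hB00 : cfM (L.take (i+2)) 0 0 = pf L (i+1) := rfl
    have hB10 : cfM (L.take (i+2)) 1 0 = qf L (i+1) := rfl
    rw [hB11, hB01, hB00, hB10] at hdet
    have hpow : ((-1:ℤ))^(i+2) = (-1)^i := by ring
    rw [hpow] at hdet
    linear_combination hdet
  · exact (hq i (by omega)).1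
  · -- Q1 ≤ Q2
    obtain ⟨e1, _, _, _⟩ := pq_succ L i hlt1
    have ha : (1:ℤ) ≤ (L.get ⟨i+1, hlt1⟩ : ℤ) := by
      exact_mod_cast htail (i+1) hlt1 (by omega)
    have h1 := (hq i (by omega)).1
    have h2 := (hq i (by omega)).2.1
    rw [e1]; exact helper1 _ _ _ ha h1 h2
  · -- 0 ≤ S2
    by_cases hi1 : i + 1 < n
    · have hsv : s (i+1) = xf L (i+3) := by simp [hs, hi1]
      rw [hsv]
      exact le_trans zero_le_one (hx (i+3) (by omega)).1
    · have hsv : s (i+1) = 0 := by simp [hs, hi1]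
      omega
  · -- S2 ≤ S1
    by_cases hi1 : i + 1 < n
    · have hsv : s (i+1) = xf L (i+3) := by simp [hs, hi1]
      rw [hsv]
      exact (hx (i+2) (by omega)).2
    · have hsv : s (i+1) = 0 := by simp [hs, hi1]
      rw [hsv]
      exact le_trans zero_le_one (hx (i+2) (by omega)).1
  · exact (hx (i+2) (by omega)).1
  · -- Q2 ≤ (K+1) S1
    obtain ⟨e1, _, _, _⟩ := pq_succ L i hlt1
    have ha : (L.get ⟨i+1, hlt1⟩ : ℤ) ≤ (K:ℤ) := hKbd (i+1) hlt1 (by omega)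
    have h1 := (hq i (by omega)).1
    have h2 := (hq i (by omega)).2.1
    have h3 := (hq i (by omega)).2.2
    have hK0 : (0:ℤ) ≤ (K:ℤ) := Int.natCast_nonneg K
    rw [e1]; exact helper2 _ _ _ _ _ ha h1 h2 h3 hcross1 hK0
  · -- S1 ≤ (K+1) Q2
    by_cases hi1 : i + 1 < n
    · have hlt2 : i + 2 < L.length := by omega
      obtain ⟨e1, _⟩ := xf_succ L (i+2) hlt2
      have ha1 : (1:ℤ) ≤ (L.get ⟨i+2, hlt2⟩ : ℤ) := by
        exact_mod_cast htail (i+2) hlt2 (by omega)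
      have ha : (L.get ⟨i+2, hlt2⟩ : ℤ) ≤ (K:ℤ) := hKbd (i+2) hlt2 (by omega)
      have hxx : xf' L (i+3) ≤ xf L (i+3) := by
        by_cases h3 : i + 3 < L.length
        · obtain ⟨_, f2⟩ := xf_succ L (i+3) h3
          rw [f2]
          exact (hx (i+3) (by omega)).2
        · have := xf_large L (i+3) (by omega)
          rw [this.2]
          exact le_trans zero_le_one (hx (i+3) (by omega)).1
      have hx3 : 1 ≤ xf L (i+3) := (hx (i+3) (by omega)).1
      have hsv : s (i+1) = xf L (i+3) := by simp [hs, hi1]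
      rw [hsv] at hsj
      have hK0 : (0:ℤ) ≤ (K:ℤ) := Int.natCast_nonneg K
      rw [e1]; exact helper3 _ _ _ _ _ ha hxx hx3 hsj hK0
    · have hlarge := xf_large L (i+2) (by omega)
      rw [hlarge.1]
      have h1 := (hq i (by omega)).1
      obtain ⟨e1, _, _, _⟩ := pq_succ L i hlt1
      have ha : (1:ℤ) ≤ (L.get ⟨i+1, hlt1⟩ : ℤ) := by
        exact_mod_cast htail (i+1) hlt1 (by omega)
      have h2 := (hq i (by omega)).2.1
      have hK0 : (0:ℤ) ≤ (K:ℤ) := Int.natCast_nonneg K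
      rw [e1]; exact helper4 _ _ _ _ ha h1 h2 hK0

lemma keyMinMax (Q1 Q2 S1 S2 m n : ℤ) (hQ1 : 1 ≤ Q1) (hQ12 : Q1 ≤ Q2)
    (hS2 : 0 ≤ S2) (hS21 : S2 ≤ S1) (hS1 : 1 ≤ S1) (h : ¬(m = 0 ∧ n = 0)) :
    min S1 Q2 ≤ |m*Q1 + n*Q2| ∨ min S1 Q2 ≤ |m*S1 - n*S2| := by
  have hmin1 : min S1 Q2 ≤ S1 := min_le_left _ _
  have hmin2 : min S1 Q2 ≤ Q2 := min_le_right _ _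
  rcases lt_trichotomy m 0 with hm|hm|hm <;> rcases lt_trichotomy n 0 with hn|hn|hn
  · refine Or.inl (le_trans ?_ (neg_le_abs _))
    have hm' : m ≤ -1 := by omega
    have hn' : n ≤ -1 := by omega
    nlinarith
  · refine Or.inr (le_trans ?_ (neg_le_abs _))
    have hm' : m ≤ -1 := by omega
    subst hn; nlinarith
  · refine Or.inr (le_trans ?_ (neg_le_abs _))
    have hm' : m ≤ -1 := by omega
    have hn' : 1 ≤ n := by omega
    nlinarith
  · refine Or.inl (le_trans ?_ (neg_le_abs _))
    have hn' : n ≤ -1 := by omega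
    subst hm; nlinarith
  · exact absurd ⟨hm, hn⟩ h
  · refine Or.inl (le_trans ?_ (le_abs_self _))
    have hn' : 1 ≤ n := by omega
    subst hm; nlinarith
  · refine Or.inr (le_trans ?_ (le_abs_self _))
    have hm' : 1 ≤ m := by omega
    have hn' : n ≤ -1 := by omega
    nlinarith
  · refine Or.inr (le_trans ?_ (le_abs_self _))
    have hm' : 1 ≤ m := by omega
    subst hn; nlinarith
  · refine Or.inl (le_trans ?_ (le_abs_self _))
    have hm' : 1 ≤ m := by omega
    have hn' : 1 ≤ n := by omega
    nlinarith

lemma le_foldr_max (l : List ℕ) : ∀ a ∈ l, a ≤ l.foldr max 0 := by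
  induction l with
  | nil => simp
  | cons b l ih =>
    intro a ha
    rcases List.mem_cons.mp ha with rfl | ha
    · simp [List.foldr_cons]
    · have := ih a ha
      simp only [List.foldr_cons]
      omega

lemma halfBound (x y A B : ℝ) (hx : |x| ≤ 1/2) (hy : |y| ≤ 1/2) (hA : 0 ≤ A) (hB : 0 ≤ B) :
    |x*A + y*B| ≤ (A+B)/2 := by
  calc |x*A + y*B| ≤ |x*A| + |y*B| := abs_add_le _ _
  _ = |x| * A + |y| * B := by rw [abs_mul, abs_mul, abs_of_nonneg hA, abs_of_nonneg hB]
  _ ≤ (1/2)*A + (1/2)*B := add_le_add (mul_le_mul_of_nonneg_right hx hA) (mul_le_mul_of_nonneg_right hy hB)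
  _ = (A+B)/2 := by ring

theorem meshAux
    (g N : ℕ) (hN : 0 < N)
    (K : ℕ)
    (Q1 Q2 S1 S2 P1 P2 ε : ℤ) (hε : ε = 1 ∨ ε = -1)
    (e1 : (g:ℤ)*Q1 - N*P1 = ε*S1) (e2 : (g:ℤ)*Q2 - N*P2 = -(ε*S2))
    (e3 : Q1*P2 - Q2*P1 = ε)
    (hQ1 : 1 ≤ Q1) (hQ12 : Q1 ≤ Q2) (hS2 : 0 ≤ S2) (hS21 : S2 ≤ S1) (hS1 : 1 ≤ S1)
    (g1 : Q2 ≤ ((K:ℤ)+1)*S1) (g2 : S1 ≤ ((K:ℤ)+1)*Q2) :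
    covRadInf (rank1Latt g N) Set.univ / sepRadInf (rank1Latt g N)
      ≤ 2 * ((K : ℝ) + 2) := by
  have hNR : (0:ℝ) < N := by exact_mod_cast hN
  have hε2 : ε * ε = 1 := by rcases hε with rfl | rfl <;> norm_num
  have hεabs : |ε| = 1 := by rcases hε with rfl | rfl <;> norm_num
  have hQ2 : 1 ≤ Q2 := le_trans hQ1 hQ12
  have hminpos : (1:ℤ) ≤ min S1 Q2 := le_min hS1 hQ2
  set Λ : ℝ := ((min S1 Q2 : ℤ) : ℝ) / N with hΛ
  set H : ℝ := ((max S1 Q2 : ℤ) : ℝ) / N with hH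
  have hΛpos : 0 < Λ := by
    apply div_pos _ hNR
    exact_mod_cast lt_of_lt_of_le zero_lt_one hminpos
  have hHpos : 0 < H := by
    apply div_pos _ hNR
    have : (1:ℤ) ≤ max S1 Q2 := le_trans hS1 (le_max_left _ _)
    exact_mod_cast lt_of_lt_of_le zero_lt_one this
  have hmaxmin : max S1 Q2 ≤ ((K:ℤ)+1) * min S1 Q2 := by
    have hK0 : (0:ℤ) ≤ (K:ℤ) := Int.natCast_nonneg K
    rcases le_total S1 Q2 with h | h
    · rw [max_eq_right h, min_eq_left h]; exact g1
    · rw [max_eq_left h, min_eq_right h]; exact g2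
  have hHΛ : H ≤ ((K:ℝ)+1) * Λ := by
    rw [hH, hΛ, div_le_iff₀ hNR, ← mul_div_assoc, div_mul_cancel₀ _ (ne_of_gt hNR)]
    push_cast
    exact_mod_cast hmaxmin
  -- membership helper
  have hmem : ∀ m n : ℤ, (![((m*Q1+n*Q2 : ℤ) : ℝ)/N,
      ((m*Q1+n*Q2 : ℤ) : ℝ)*g/N - ((m*P1+n*P2 : ℤ) : ℝ)] : Fin 2 → ℝ) ∈ rank1Latt g N :=
    fun m n => ⟨m*Q1+n*Q2, m*P1+n*P2, rfl⟩
  -- second coordinate value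
  have hco2 : ∀ m n : ℤ, ((m*Q1+n*Q2 : ℤ) : ℝ)*g/N - ((m*P1+n*P2 : ℤ) : ℝ)
      = (ε:ℝ)*((m:ℝ)*S1 - n*S2)/N := by
    intro m n
    have hz : ((m*Q1+n*Q2 : ℤ) : ℝ)*g - ((m*P1+n*P2 : ℤ) : ℝ)*N = (ε:ℝ)*((m:ℝ)*S1 - n*S2) := by
      have : (m*Q1+n*Q2)*(g:ℤ) - (m*P1+n*P2)*N = ε*(m*S1 - n*S2) := by
        linear_combination m * e1 + n * e2
      exact_mod_cast congrArg (fun z : ℤ => (z : ℝ)) this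
    field_simp at hz ⊢
    linarith [hz]
  -- casts
  have hQ1R : (1:ℝ) ≤ (Q1:ℝ) := by exact_mod_cast hQ1
  have hQ12R : (Q1:ℝ) ≤ (Q2:ℝ) := by exact_mod_cast hQ12
  have hS1R : (1:ℝ) ≤ (S1:ℝ) := by exact_mod_cast hS1
  have hS2R : (0:ℝ) ≤ (S2:ℝ) := by exact_mod_cast hS2
  have hS21R : (S2:ℝ) ≤ (S1:ℝ) := by exact_mod_cast hS21
  have hQ2H : (Q2:ℝ)/N ≤ H := by
    rw [hH]
    gcongr
    exact_mod_cast le_max_right S1 Q2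
  have hS1H : (S1:ℝ)/N ≤ H := by
    rw [hH]
    gcongr
    exact_mod_cast le_max_left S1 Q2
  have hε2R : (ε:ℝ)*(ε:ℝ) = 1 := by exact_mod_cast hε2
  -- covering bound
  have hcov : covRadInf (rank1Latt g N) Set.univ ≤ H := by
    apply Real.iSup_le _ (le_of_lt hHpos)
    rintro ⟨x, -⟩
    have hEz : (0:ℤ) < Q2*S1 + Q1*S2 := by nlinarith
    have hE : (0:ℝ) < ((Q2:ℝ)*S1 + Q1*S2) := by
      have : ((Q2*S1 + Q1*S2 : ℤ) : ℝ) = (Q2:ℝ)*S1 + Q1*S2 := by push_cast; ring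
      rw [← this]; exact_mod_cast hEz
    set c1 : ℝ := N*(x 0 * S2 + ε*(x 1)*Q2)/((Q2:ℝ)*S1 + Q1*S2) with hc1
    set c2 : ℝ := N*(x 0 * S1 - ε*(x 1)*Q1)/((Q2:ℝ)*S1 + Q1*S2) with hc2
    have hx0 : x 0 * N = c1*Q1 + c2*Q2 := by
      rw [hc1, hc2]
      field_simp
      ring
    have hx1 : x 1 * N = (ε:ℝ)*(c1*S1 - c2*S2) := by
      have hcc : c1*S1 - c2*S2 = N*(x 1)*ε := by
        rw [hc1, hc2]
        field_simp
        ring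
      rw [hcc]
      linear_combination (-((N:ℝ) * x 1)) * hε2R
    set m := round c1 with hm
    set n := round c2 with hn
    refine ciInf_le_of_le ⟨0, by rintro r ⟨y, rfl⟩; exact dist_nonneg⟩ ⟨_, hmem m n⟩ ?_
    rw [dist_pi_le_iff (le_of_lt hHpos)]
    have hr1 : |c1 - (m:ℝ)| ≤ 1/2 := abs_sub_round c1
    have hr2 : |c2 - (n:ℝ)| ≤ 1/2 := abs_sub_round c2
    intro i
    fin_cases i
    · show dist (x 0) (((m*Q1+n*Q2 : ℤ) : ℝ)/N) ≤ H
      rw [Real.dist_eq]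
      have hval : x 0 - ((m*Q1+n*Q2 : ℤ):ℝ)/N = ((c1 - m)*Q1 + (c2 - n)*Q2)/N := by
        rw [eq_div_iff (ne_of_gt hNR), sub_mul, div_mul_cancel₀ _ (ne_of_gt hNR), hx0]
        push_cast
        ring
      rw [hval, abs_div, abs_of_pos hNR]
      have hb := halfBound (c1 - m) (c2 - n) (Q1:ℝ) (Q2:ℝ) hr1 hr2
        (by linarith) (by linarith)
      refine le_trans ((div_le_div_iff_of_pos_right hNR).mpr hb) ?_
      refine le_trans ((div_le_div_iff_of_pos_right hNR).mpr
        (show ((Q1:ℝ)+(Q2:ℝ))/2 ≤ (Q2:ℝ) by linarith)) hQ2H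
    · show dist (x 1) (((m*Q1+n*Q2 : ℤ) : ℝ)*g/N - ((m*P1+n*P2 : ℤ) : ℝ)) ≤ H
      rw [Real.dist_eq, hco2 m n]
      have hval : x 1 - (ε:ℝ)*((m:ℝ)*S1 - n*S2)/N
          = (ε:ℝ)*((c1 - m)*S1 + (-(c2 - n))*S2)/N := by
        rw [eq_div_iff (ne_of_gt hNR), sub_mul, div_mul_cancel₀ _ (ne_of_gt hNR), hx1]
        push_cast
        ring
      rw [hval, abs_div, abs_of_pos hNR, abs_mul]
      have hεabsR : |(ε:ℝ)| = 1 := by exact_mod_cast hεabs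
      rw [hεabsR, one_mul]
      have hb := halfBound (c1 - m) (-(c2 - n)) (S1:ℝ) (S2:ℝ) hr1 (by rw [abs_neg]; exact hr2)
        (by linarith) hS2R
      refine le_trans ((div_le_div_iff_of_pos_right hNR).mpr hb) ?_
      refine le_trans ((div_le_div_iff_of_pos_right hNR).mpr
        (show ((S1:ℝ)+(S2:ℝ))/2 ≤ (S1:ℝ) by linarith)) hS1H
  -- separation bound
  have hsInf : Λ ≤ sInf {r : ℝ | ∃ x ∈ rank1Latt g N, ∃ y ∈ rank1Latt g N, x ≠ y ∧ r = dist x y} := by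
    apply le_csInf
    · refine ⟨_, ![((0:ℤ):ℝ)/N, ((0:ℤ):ℝ)*g/N - ((0:ℤ):ℝ)], ⟨0,0,rfl⟩,
        ![((0:ℤ):ℝ)/N, ((0:ℤ):ℝ)*g/N - ((1:ℤ):ℝ)], ⟨0,1,rfl⟩, ?_, rfl⟩
      intro h
      have h1 := congrFun h 1
      simp at h1
    · rintro r ⟨x, ⟨t1,u1,rfl⟩, y, ⟨t2,u2,rfl⟩, hxy, rfl⟩
      set t : ℤ := t1 - t2 with ht
      set u : ℤ := u1 - u2 with hu
      have htu : ¬(t = 0 ∧ u = 0) := by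
        rintro ⟨h1, h2⟩
        apply hxy
        have e1' : t1 = t2 := by omega
        have e2' : u1 = u2 := by omega
        rw [e1', e2']
      set mm : ℤ := ε*(P2*t - Q2*u) with hmm
      set nn : ℤ := ε*(Q1*u - P1*t) with hnn
      have hmt : mm*Q1 + nn*Q2 = t := by
        rw [hmm, hnn]; linear_combination (ε*t)*e3 + t*hε2
      have hmu : mm*P1 + nn*P2 = u := by
        rw [hmm, hnn]; linear_combination (ε*u)*e3 + u*hε2
      have hmn : ¬(mm = 0 ∧ nn = 0) := by
        rintro ⟨h1, h2⟩
        rw [h1, h2] at hmt hmu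
        simp at hmt hmu
        exact htu ⟨hmt.symm, hmu.symm⟩
      rcases keyMinMax Q1 Q2 S1 S2 mm nn hQ1 hQ12 hS2 hS21 hS1 hmn with hk | hk
      · rw [hmt] at hk
        refine le_trans ?_ (dist_le_pi_dist _ _ 0)
        have hxc : (![(t1:ℝ)/N, (t1:ℝ)*g/N - u1] : Fin 2 → ℝ) 0 = (t1:ℝ)/N := rfl
        have hyc : (![(t2:ℝ)/N, (t2:ℝ)*g/N - u2] : Fin 2 → ℝ) 0 = (t2:ℝ)/N := rfl
        rw [hxc, hyc, Real.dist_eq, div_sub_div_same, ← Int.cast_sub, ← ht, abs_div,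
          abs_of_pos hNR, hΛ]
        rw [← Int.cast_abs]
        exact (div_le_div_iff_of_pos_right hNR).mpr (by exact_mod_cast hk)
      · refine le_trans ?_ (dist_le_pi_dist _ _ 1)
        have hxc : (![(t1:ℝ)/N, (t1:ℝ)*g/N - u1] : Fin 2 → ℝ) 1 = (t1:ℝ)*g/N - u1 := rfl
        have hyc : (![(t2:ℝ)/N, (t2:ℝ)*g/N - u2] : Fin 2 → ℝ) 1 = (t2:ℝ)*g/N - u2 := rfl
        have hz : t*(g:ℤ) - u*N = ε*(mm*S1 - nn*S2) := by
          rw [← hmt, ← hmu]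
          linear_combination mm*e1 + nn*e2
        have hdiff : ((t1:ℝ)*g/N - u1) - ((t2:ℝ)*g/N - u2) = ((ε:ℝ)*((mm:ℝ)*S1 - nn*S2))/N := by
          have h1 : ((t1:ℝ)*g/N - u1) - ((t2:ℝ)*g/N - u2) = (((t*g - u*N : ℤ)) : ℝ)/N := by
            rw [ht, hu]; push_cast; field_simp; ring
          rw [h1, hz]; push_cast; ring
        rw [hxc, hyc, Real.dist_eq, hdiff, abs_div, abs_of_pos hNR, abs_mul, hΛ]
        have hεabsR : |(ε:ℝ)| = 1 := by exact_mod_cast hεabs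
        rw [hεabsR, one_mul]
        have hrec : ((mm:ℝ)*S1 - nn*S2) = ((mm*S1 - nn*S2 : ℤ) : ℝ) := by push_cast; ring
        rw [hrec, ← Int.cast_abs]
        exact (div_le_div_iff_of_pos_right hNR).mpr (by exact_mod_cast hk)
  have hseppos : (0:ℝ) < Λ/2 := by positivity
  have hsep : Λ/2 ≤ sepRadInf (rank1Latt g N) := by
    unfold sepRadInf
    linarith [hsInf]
  calc covRadInf (rank1Latt g N) Set.univ / sepRadInf (rank1Latt g N)
      ≤ H / (Λ/2) := div_le_div₀ (le_of_lt hHpos) hcov hseppos hsep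
    _ ≤ 2*((K:ℝ)+2) := by
        rw [div_le_iff₀ hseppos]
        have hK0R : (0:ℝ) ≤ (K:ℝ) := Nat.cast_nonneg K
        nlinarith [hHΛ, hΛpos]

/-- Let `g, N ∈ ℕ` with `gcd(g, N) = 1`, `g/N = [a₀; a₁, …, a_ℓ]` with `a_ℓ = 1` and
`K = max(a₁, …, a_ℓ)`. Then the mesh ratio of the lattice `X = { (t/N, tg/N − u) }`
satisfies `ρ_∞(X; ℝ²) ≤ 2(K+2)`. -/
theorem meshRatio_rank1Latt_le
    (g N : ℕ) (hN : 0 < N) (hgcd : Nat.Coprime g N)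
    (a₀ : ℕ) (as : List ℕ) (has : as ≠ [])
    (hpos : ∀ a ∈ as, 1 ≤ a) (hlast : as.getLast? = some 1)
    (hcf : (g : ℝ) / N = cfVal (a₀ :: as))
    (K : ℕ) (hK : K = as.foldr max 0) :
    covRadInf (rank1Latt g N) Set.univ / sepRadInf (rank1Latt g N)
      ≤ 2 * ((K : ℝ) + 2) := by
  have hKb : ∀ a ∈ as, a ≤ K := by
    intro a ha
    rw [hK]
    exact le_foldr_max as a ha
  obtain ⟨Q1, Q2, S1, S2, P1, P2, ε, hε, e1, e2, e3, hQ1, hQ12, hS2, hS21, hS1, g1, g2⟩ :=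
    core g N hN hgcd a₀ as has hpos hcf K hKb
  exact meshAux g N hN K Q1 Q2 S1 S2 P1 P2 ε hε e1 e2 e3 hQ1 hQ12 hS2 hS21 hS1 g1 g2
end

section
/- Let F_m denote the Fibonacci numbers (F_1 = F_2 = 1, F_k = F_{k-1} + F_{k-2}). The Fibonacci lattice point set F_m = { (n/F_m, {n F_{m-1}/F_m}) : n = 0, …, F_m − 1 } has mesh ratio ρ_∞ bounded by 12, uniformly in m ≥ 3. -/
open Nat


lemma fibA (r : ℕ) : ∀ k : ℕ, (fib (k+r) : ℤ) * fib (k+1) - fib (k+r+1) * fib k = (-1)^k * fib r := by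
  intro k
  induction k with
  | zero => simp
  | succ k ih =>
    have h1 : (fib (k+r+1+1) : ℤ) = fib (k+r) + fib (k+r+1) := by
      push_cast [show k+r+1+1 = (k+r)+2 from rfl, Nat.fib_add_two]; ring
    have h2 : (fib (k+2) : ℤ) = fib k + fib (k+1) := by
      push_cast [Nat.fib_add_two]; ring
    rw [show k+1+r = k+r+1 from by ring, h2, h1]
    have : (-1:ℤ)^(k+1) = -(-1)^k := by ring
    rw [this]; linarith [ih]

lemma exists_abcd (p t : ℕ) (ht : 1 ≤ t) : ∃ a b c d : ℕ,
    0 < a ∧ 0 < b ∧ 0 < c ∧ 0 < d ∧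
    a * d + b * c = fib (p+t+2) ∧
    ((fib (p+t+2):ℤ) ∣ (b:ℤ) - a * fib (p+t+1)) ∧
    ((fib (p+t+2):ℤ) ∣ (d:ℤ) + c * fib (p+t+1)) ∧
    a + c = fib (p+1) + fib (p+2) ∧ b + d = fib t + fib (t+1) ∧
    min (fib (p+2)) (fib (t+1)) ≤ max a b ∧ min (fib (p+2)) (fib (t+1)) ≤ max c d := by
  have hI := fibA (t+1) p
  have hII := fibA t (p+1)
  rw [show p + (t+1) = p + t + 1 from by ring] at hI
  rw [show p + 1 + t = p + t + 1 from by ring, show p + t + 1 + 1 = p + t + 2 from rfl] at hII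
  rw [show p + t + 1 + 1 = p + t + 2 from rfl] at hI
  have hp1 : 0 < fib (p+1) := fib_pos.mpr (by omega)
  have hp2 : 0 < fib (p+2) := fib_pos.mpr (by omega)
  have ht1 : 0 < fib t := fib_pos.mpr (by omega)
  have ht2 : 0 < fib (t+1) := fib_pos.mpr (by omega)
  have hdetA : fib (p+1) * fib t + fib (t+1) * fib (p+2) = fib (p+t+2) := by
    have h := Nat.fib_add (p+1) t
    rw [show p+1+t+1 = p+t+2 from by ring] at h
    rw [show p+1+1 = p+2 from rfl] at h
    rw [h]; ring
  rcases Nat.even_or_odd p with hpe | hpo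
  · have hsg : ((-1:ℤ))^p = 1 := hpe.neg_one_pow
    have hsg2 : ((-1:ℤ))^(p+1) = -1 := by rw [pow_succ, hsg]; ring
    refine ⟨fib (p+1), fib (t+1), fib (p+2), fib t, hp1, ht2, hp2, ht1, hdetA, ?_, ?_, ?_, ?_, ?_, ?_⟩
    · exact ⟨-(fib p : ℤ), by linear_combination (-1 : ℤ) * hI + (-(fib (t+1) : ℤ)) * hsg⟩
    · exact ⟨(fib (p+1) : ℤ), by linear_combination hII + (fib t : ℤ) * hsg2⟩
    · omega
    · omega
    · exact le_trans (min_le_right _ _) (le_max_right _ _)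
    · exact le_trans (min_le_left _ _) (le_max_left _ _)
  · have hsg : ((-1:ℤ))^p = -1 := hpo.neg_one_pow
    have hsg2 : ((-1:ℤ))^(p+1) = 1 := by rw [pow_succ, hsg]; ring
    refine ⟨fib (p+2), fib t, fib (p+1), fib (t+1), hp2, ht1, hp1, ht2, by rw [← hdetA]; ring, ?_, ?_, ?_, ?_, ?_, ?_⟩
    · exact ⟨-(fib (p+1) : ℤ), by linear_combination (-1 : ℤ) * hII + (-(fib t : ℤ)) * hsg2⟩
    · exact ⟨(fib p : ℤ), by linear_combination hI + (fib (t+1) : ℤ) * hsg⟩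
    · omega
    · omega
    · exact le_trans (min_le_left _ _) (le_max_left _ _)
    · exact le_trans (min_le_right _ _) (le_max_right _ _)


lemma numEven (t : ℕ) (h : 3 ≤ t) :
    fib (t+1) + fib (t+2) + 1 ≤ 6 * fib (t+1) ∧
    fib t + fib (t+1) + 2 ≤ 6 * fib (t+1) ∧
    2*(fib (t+1) + fib (t+2)) + 1 ≤ fib (t+t+2) ∧
    2*(fib t + fib (t+1)) + 1 ≤ fib (t+t+2) := by
  have h2 : fib (t+2) = fib t + fib (t+1) := Nat.fib_add_two
  have h0 : 2 ≤ fib t := by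
    calc 2 = fib 3 := rfl
    _ ≤ fib t := Nat.fib_mono h
  have h1 : 3 ≤ fib (t+1) := by
    calc 3 = fib 4 := rfl
    _ ≤ fib (t+1) := Nat.fib_mono (by omega)
  have h01 : fib t ≤ fib (t+1) := Nat.fib_mono (by omega)
  have hF : fib (t+t+2) = fib (t+1) * fib t + fib (t+2) * fib (t+1) := by
    have := Nat.fib_add (t+1) t
    rw [show t+1+t+1 = t+t+2 from by ring] at this
    rw [this, show t+1+1 = t+2 from rfl]
  refine ⟨by omega, by omega, ?_, ?_⟩ <;> rw [hF] <;> nlinarith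
lemma numOdd (p : ℕ) (h : 3 ≤ p) :
    fib (p+1) + fib (p+2) + 2 ≤ 6 * fib (p+2) ∧
    2*(fib (p+1) + fib (p+2)) + 1 ≤ fib (p+p+3) := by
  have h1 : 5 ≤ fib (p+2) := by
    calc 5 = fib 5 := rfl
    _ ≤ fib (p+2) := Nat.fib_mono (by omega)
  have h01 : fib (p+1) ≤ fib (p+2) := Nat.fib_mono (by omega)
  have h0 : 1 ≤ fib (p+1) := Nat.fib_pos.mpr (by omega)
  have hF : fib (p+p+3) = fib (p+1) * fib (p+1) + fib (p+2) * fib (p+2) := by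
    have := Nat.fib_add (p+1) (p+1)
    rw [show p+1+(p+1)+1 = p+p+3 from by ring] at this
    rw [this, show p+1+1 = p+2 from rfl]
  refine ⟨by omega, ?_⟩
  rw [hF]; nlinarith


lemma coreSep (F G a b c d S : ℕ) (hF : 0 < F)
    (ha : 0 < a) (hb : 0 < b) (hc : 0 < c) (hd : 0 < d)
    (hdet : a * d + b * c = F)
    (hu : (F:ℤ) ∣ (b:ℤ) - a * G) (hw : (F:ℤ) ∣ (d:ℤ) + c * G)
    (hS1 : S ≤ max a b) (hS2 : S ≤ max c d) (hS3 : S ≤ a + c) (hS4 : S ≤ b + d)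
    (n cc : ℤ) (hn : n ≠ 0) (hdvd : (F:ℤ) ∣ cc - n * G) :
    (S:ℤ) ≤ max |n| |cc| := by
  have h1 : (F:ℤ) ∣ d * n + c * cc := by
    have : (d:ℤ) * n + c * cc = n * ((d:ℤ) + c * G) + c * (cc - n * G) := by ring
    rw [this]; exact dvd_add (Dvd.dvd.mul_left hw _) (Dvd.dvd.mul_left hdvd _)
  have h2 : (F:ℤ) ∣ b * n - a * cc := by
    have : (b:ℤ) * n - a * cc = n * ((b:ℤ) - a * G) - a * (cc - n * G) := by ring
    rw [this]; exact dvd_sub (Dvd.dvd.mul_left hu _) (Dvd.dvd.mul_left hdvd _)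
  obtain ⟨i, hi⟩ := h1
  obtain ⟨i', hi'⟩ := h2
  have hFz : (F:ℤ) ≠ 0 := by exact_mod_cast hF.ne'
  have hdetz : (a:ℤ) * d + b * c = F := by exact_mod_cast congrArg (Nat.cast (R := ℤ)) hdet
  have hrn : n = a * i + c * i' := by
    have : (F:ℤ) * n = F * (a * i + c * i') := by
      linear_combination (a:ℤ) * hi + (c:ℤ) * hi' + (-n) * hdetz
    exact mul_left_cancel₀ hFz this
  have hrc : cc = b * i - d * i' := by
    have : (F:ℤ) * cc = F * (b * i - d * i') := by
      linear_combination (b:ℤ) * hi - (d:ℤ) * hi' + (-cc) * hdetz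
    exact mul_left_cancel₀ hFz this
  have haz : (1:ℤ) ≤ a := by exact_mod_cast ha
  have hbz : (1:ℤ) ≤ b := by exact_mod_cast hb
  have hcz : (1:ℤ) ≤ c := by exact_mod_cast hc
  have hdz : (1:ℤ) ≤ d := by exact_mod_cast hd
  have habs1 : (S:ℤ) ≤ max (a:ℤ) (b:ℤ) := by rw [← Nat.cast_max]; exact_mod_cast hS1
  have habs2 : (S:ℤ) ≤ max (c:ℤ) (d:ℤ) := by rw [← Nat.cast_max]; exact_mod_cast hS2
  have habs3 : (S:ℤ) ≤ (a:ℤ) + c := by exact_mod_cast hS3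
  have habs4 : (S:ℤ) ≤ (b:ℤ) + d := by exact_mod_cast hS4
  have hnabs := le_abs_self n
  have hnabs' := neg_le_abs n
  have hcabs := le_abs_self cc
  have hcabs' := neg_le_abs cc
  -- product bound helpers
  have pb : ∀ (x : ℤ) (k : ℤ), (0:ℤ) ≤ x → 1 ≤ k → x ≤ x * k := by
    intro x k hx hk; exact le_mul_of_one_le_right hx hk
  have nb : ∀ (x : ℤ) (k : ℤ), (0:ℤ) ≤ x → k ≤ -1 → x * k ≤ -x := by
    intro x k hx hk
    have := mul_le_mul_of_nonneg_left hk hx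
    linarith
  rcases eq_or_ne i 0 with hi0 | hi0
  · subst hi0
    have hi'0 : i' ≠ 0 := by intro h; apply hn; rw [hrn, h]; ring
    have h1' : (c:ℤ) ≤ |n| := by
      rcases hi'0.lt_or_gt with h | h
      · have := nb c i' (by linarith) (by omega); linarith [hrn]
      · have := pb c i' (by linarith) (by omega); linarith [hrn]
    have h2' : (d:ℤ) ≤ |cc| := by
      rcases hi'0.lt_or_gt with h | h
      · have := nb d i' (by linarith) (by omega); linarith [hrc]
      · have := pb d i' (by linarith) (by omega); linarith [hrc]
    exact le_trans habs2 (le_trans (max_le_max h1' h2') le_rfl)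
  · rcases eq_or_ne i' 0 with hi'0 | hi'0
    · subst hi'0
      have h1' : (a:ℤ) ≤ |n| := by
        rcases hi0.lt_or_gt with h | h
        · have := nb a i (by linarith) (by omega); linarith [hrn]
        · have := pb a i (by linarith) (by omega); linarith [hrn]
      have h2' : (b:ℤ) ≤ |cc| := by
        rcases hi0.lt_or_gt with h | h
        · have := nb b i (by linarith) (by omega); linarith [hrc]
        · have := pb b i (by linarith) (by omega); linarith [hrc]
      exact le_trans habs1 (max_le_max h1' h2')
    · rcases hi0.lt_or_gt with h | h <;> rcases hi'0.lt_or_gt with h' | h'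
      · -- i ≤ -1, i' ≤ -1 : |n| ≥ a + c
        have t1 := nb a i (by linarith) (by omega)
        have t2 := nb c i' (by linarith) (by omega)
        have : (a:ℤ) + c ≤ |n| := by linarith [hrn]
        exact le_trans habs3 (le_trans this (le_max_left _ _))
      · -- i ≤ -1, i' ≥ 1 : cc = b i - d i' ≤ -(b+d)
        have t1 := nb b i (by linarith) (by omega)
        have t2 := pb d i' (by linarith) (by omega)
        have : (b:ℤ) + d ≤ |cc| := by linarith [hrc]
        exact le_trans habs4 (le_trans this (le_max_right _ _))
      · -- i ≥ 1, i' ≤ -1 : cc ≥ b + d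
        have t1 := pb b i (by linarith) (by omega)
        have t2 := nb d i' (by linarith) (by omega)
        have : (b:ℤ) + d ≤ |cc| := by linarith [hrc]
        exact le_trans habs4 (le_trans this (le_max_right _ _))
      · have t1 := pb a i (by linarith) (by omega)
        have t2 := pb c i' (by linarith) (by omega)
        have : (a:ℤ) + c ≤ |n| := by linarith [hrn]
        exact le_trans habs3 (le_trans this (le_max_left _ _))


lemma corePar (F G a b c d : ℕ) (hF : 0 < F)
    (hdet : a * d + b * c = F)
    (hu : (F:ℤ) ∣ (b:ℤ) - a * G) (hw : (F:ℤ) ∣ (d:ℤ) + c * G)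
    (e1 e2 : ℤ) (he1 : e1 = 1 ∨ e1 = -1) (he2 : e2 = 1 ∨ e2 = -1)
    (z1 z2 : ℤ) :
    ∃ n cc : ℤ, (F:ℤ) ∣ cc - n * G ∧ ∃ s t : ℝ,
      0 ≤ s ∧ s < 1 ∧ 0 ≤ t ∧ t < 1 ∧
      ((z1 : ℝ) - n) = (s * a) * e1 + (t * c) * e2 ∧
      ((z2 : ℝ) - cc) = (s * b) * e1 - (t * d) * e2 := by
  have hFR : (F:ℝ) ≠ 0 := by positivity
  have he1sq : (e1:ℝ)^2 = 1 := by rcases he1 with h | h <;> simp [h]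
  have he2sq : (e2:ℝ)^2 = 1 := by rcases he2 with h | h <;> simp [h]
  set α : ℝ := ((d * z1 + c * z2) * e1) / F with hα
  set β : ℝ := ((b * z1 - a * z2) * e2) / F with hβ
  have hdetR : (a:ℝ) * d + b * c = F := by exact_mod_cast congrArg (Nat.cast (R := ℝ)) hdet
  have hz1 : (z1 : ℝ) = α * e1 * a + β * e2 * c := by
    rw [hα, hβ]; field_simp
    linear_combination (-((d:ℝ)*z1+c*z2)*a)*he1sq + (-((b:ℝ)*z1 - a*z2)*c)*he2sq + (-(z1:ℝ))*hdetR
  have hz2 : (z2 : ℝ) = α * e1 * b - β * e2 * d := by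
    rw [hα, hβ]; field_simp
    linear_combination (-((d:ℝ)*z1+c*z2)*b)*he1sq + (((b:ℝ)*z1 - a*z2)*d)*he2sq + (-(z2:ℝ))*hdetR
  refine ⟨⌊α⌋ * e1 * a + ⌊β⌋ * e2 * c, ⌊α⌋ * e1 * b - ⌊β⌋ * e2 * d, ?_, Int.fract α, Int.fract β,
    Int.fract_nonneg _, Int.fract_lt_one _, Int.fract_nonneg _, Int.fract_lt_one _, ?_, ?_⟩
  · have : (⌊α⌋ * e1 * b - ⌊β⌋ * e2 * d) - (⌊α⌋ * e1 * a + ⌊β⌋ * e2 * c) * G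
        = ⌊α⌋ * e1 * ((b:ℤ) - a * G) - ⌊β⌋ * e2 * ((d:ℤ) + c * G) := by ring
    rw [this]
    exact dvd_sub (Dvd.dvd.mul_left hu _) (Dvd.dvd.mul_left hw _)
  · simp only [Int.fract]; push_cast
    rw [hz1]; ring
  · simp only [Int.fract]; push_cast
    rw [hz2]; ring

set_option maxHeartbeats 1000000 in
lemma coreCov (F G a b c d S : ℕ) (hF : 0 < F)
    (ha : 0 < a) (hb : 0 < b) (hc : 0 < c) (hd : 0 < d)
    (hdet : a * d + b * c = F)
    (hu : (F:ℤ) ∣ (b:ℤ) - a * G) (hw : (F:ℤ) ∣ (d:ℤ) + c * G)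
    (hW1 : a + c + 1 ≤ 6*S) (hW2 : b + d + 2 ≤ 6*S)
    (hR1 : 2*(a+c) + 1 ≤ F) (hR2 : 2*(b+d) + 1 ≤ F)
    (z1 z2 : ℤ) (hz1 : 0 ≤ z1) (hz1' : z1 ≤ (F:ℤ) - 1)
    (hz2 : 0 ≤ z2) (hz2' : z2 ≤ (F:ℤ) - 1) :
    ∃ n cc : ℤ, (F:ℤ) ∣ cc - n * G ∧ 0 ≤ n ∧ n ≤ (F:ℤ) - 1 ∧ 0 ≤ cc ∧ cc ≤ (F:ℤ) - 1 ∧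
      |z1 - n| ≤ 6*(S:ℤ) - 1 ∧ |z2 - cc| ≤ 6*(S:ℤ) - 1 := by
  have haz : (1:ℤ) ≤ a := by exact_mod_cast ha
  have hbz : (1:ℤ) ≤ b := by exact_mod_cast hb
  have hcz : (1:ℤ) ≤ c := by exact_mod_cast hc
  have hdz : (1:ℤ) ≤ d := by exact_mod_cast hd
  have hdetz : (a:ℤ) * d + b * c = F := by exact_mod_cast congrArg (Nat.cast (R := ℤ)) hdet
  have hW1z : (a:ℤ) + c + 1 ≤ 6*S := by exact_mod_cast hW1
  have hW2z : (b:ℤ) + d + 2 ≤ 6*S := by exact_mod_cast hW2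
  have hR1z : 2*((a:ℤ)+c) + 1 ≤ F := by exact_mod_cast hR1
  have hR2z : 2*((b:ℤ)+d) + 1 ≤ F := by exact_mod_cast hR2
  have haR : (0:ℝ) < a := by exact_mod_cast ha
  have hbR : (0:ℝ) < b := by exact_mod_cast hb
  have hcR : (0:ℝ) < c := by exact_mod_cast hc
  have hdR : (0:ℝ) < d := by exact_mod_cast hd
  rcases lt_or_ge z2 ((b:ℤ) + d) with hbot | h1
  · rcases lt_or_ge z1 (c:ℤ) with hbl | h2
    · -- bottom-left corner : point (0,0)
      refine ⟨0, 0, by simp, by omega, by omega, by omega, by omega, ?_, ?_⟩ <;>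
        (rw [abs_le]; omega)
    · rcases lt_or_ge ((F:ℤ) - 1 - a) z1 with hbr | h3
      · -- bottom-right : point (F - c, d)
        refine ⟨(F:ℤ) - c, (d:ℤ), ?_, by omega, by omega, by omega, by omega, ?_, ?_⟩
        · have : (d:ℤ) - ((F:ℤ)-c)*G = ((d:ℤ) + c*G) - F*G := by ring
          rw [this]; exact dvd_sub hw (dvd_mul_right _ _)
        · rw [abs_le]; omega
        · rw [abs_le]; omega
      · -- bottom-middle : variant (-1, 1)
        obtain ⟨n, cc, hdvd, s, t, hs0, hs1, ht0, ht1, hx, hy⟩ :=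
          corePar F G a b c d hF hdet hu hw (-1) 1 (Or.inr rfl) (Or.inl rfl) z1 z2
        push_cast at hx hy
        have k1 : s * a < a := by nlinarith
        have k2 : t * c < c := by nlinarith
        have k3 : 0 ≤ s * a := by positivity
        have k4 : 0 ≤ t * c := by positivity
        have k5 : s * b < b := by nlinarith
        have k6 : t * d < d := by nlinarith
        have k7 : 0 ≤ s * b := by positivity
        have k8 : 0 ≤ t * d := by positivity
        have i1 : -(a:ℤ) < z1 - n := by
          have : (-(a:ℤ):ℝ) < ((z1 - n : ℤ):ℝ) := by push_cast; linarith
          exact_mod_cast this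
        have i2 : z1 - n < c := by
          have : ((z1 - n : ℤ):ℝ) < (c:ℝ) := by push_cast; linarith
          exact_mod_cast this
        have i3 : -((b:ℤ)+d) < z2 - cc := by
          have : ((-((b:ℤ)+d)):ℝ) < ((z2 - cc : ℤ):ℝ) := by push_cast; linarith
          exact_mod_cast this
        have i4 : z2 - cc ≤ 0 := by
          have : ((z2 - cc : ℤ):ℝ) ≤ 0 := by push_cast; linarith
          exact_mod_cast this
        refine ⟨n, cc, hdvd, by omega, by omega, by omega, by omega, ?_, ?_⟩ <;>
          (rw [abs_le]; omega)
  · rcases lt_or_ge ((F:ℤ) - 1 - (b + d)) z2 with htop | h2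
    · rcases lt_or_ge z1 (a:ℤ) with htl | h3
      · -- top-left : point (c, F - d)
        refine ⟨(c:ℤ), (F:ℤ) - d, ?_, by omega, by omega, by omega, by omega, ?_, ?_⟩
        · have : ((F:ℤ) - d) - (c:ℤ)*G = (F:ℤ)*1 - ((d:ℤ) + c*G) := by ring
          rw [this]; exact dvd_sub (dvd_mul_right _ _) hw
        · rw [abs_le]; omega
        · rw [abs_le]; omega
      · rcases lt_or_ge ((F:ℤ) - 1 - c) z1 with htr | h4
        · -- top-right : point (F - a, F - b)
          refine ⟨(F:ℤ) - a, (F:ℤ) - b, ?_, by omega, by omega, by omega, by omega, ?_, ?_⟩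
          · have : ((F:ℤ) - b) - ((F:ℤ) - a)*G = (-1) * ((b:ℤ) - a*G) + (F:ℤ)*(1 - G) := by ring
            rw [this]; exact dvd_add (Dvd.dvd.mul_left hu _) (dvd_mul_right _ _)
          · rw [abs_le]; omega
          · rw [abs_le]; omega
        · -- top-middle : variant (1, -1)
          obtain ⟨n, cc, hdvd, s, t, hs0, hs1, ht0, ht1, hx, hy⟩ :=
            corePar F G a b c d hF hdet hu hw 1 (-1) (Or.inl rfl) (Or.inr rfl) z1 z2
          push_cast at hx hy
          have k1 : s * a < a := by nlinarith
          have k2 : t * c < c := by nlinarith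
          have k3 : 0 ≤ s * a := by positivity
          have k4 : 0 ≤ t * c := by positivity
          have k5 : s * b < b := by nlinarith
          have k6 : t * d < d := by nlinarith
          have k7 : 0 ≤ s * b := by positivity
          have k8 : 0 ≤ t * d := by positivity
          have i1 : -(c:ℤ) < z1 - n := by
            have : (-(c:ℤ):ℝ) < ((z1 - n : ℤ):ℝ) := by push_cast; linarith
            exact_mod_cast this
          have i2 : z1 - n < a := by
            have : ((z1 - n : ℤ):ℝ) < (a:ℝ) := by push_cast; linarith
            exact_mod_cast this
          have i3 : (0:ℤ) ≤ z2 - cc := by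
            have : (0:ℝ) ≤ ((z2 - cc : ℤ):ℝ) := by push_cast; linarith
            exact_mod_cast this
          have i4 : z2 - cc < (b:ℤ) + d := by
            have : ((z2 - cc : ℤ):ℝ) < ((b:ℤ):ℝ) + ((d:ℤ):ℝ) := by push_cast; linarith
            exact_mod_cast this
          refine ⟨n, cc, hdvd, by omega, by omega, by omega, by omega, ?_, ?_⟩ <;>
            (rw [abs_le]; omega)
    · rcases lt_or_ge z1 ((a:ℤ) + c) with hml | h3
      · -- middle-left : variant (-1, -1)
        obtain ⟨n, cc, hdvd, s, t, hs0, hs1, ht0, ht1, hx, hy⟩ :=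
          corePar F G a b c d hF hdet hu hw (-1) (-1) (Or.inr rfl) (Or.inr rfl) z1 z2
        push_cast at hx hy
        have k1 : s * a < a := by nlinarith
        have k2 : t * c < c := by nlinarith
        have k3 : 0 ≤ s * a := by positivity
        have k4 : 0 ≤ t * c := by positivity
        have k5 : s * b < b := by nlinarith
        have k6 : t * d < d := by nlinarith
        have k7 : 0 ≤ s * b := by positivity
        have k8 : 0 ≤ t * d := by positivity
        have i1 : -((a:ℤ) + c) < z1 - n := by
          have : ((-((a:ℤ)+c)):ℝ) < ((z1 - n : ℤ):ℝ) := by push_cast; linarith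
          exact_mod_cast this
        have i2 : z1 - n ≤ 0 := by
          have : ((z1 - n : ℤ):ℝ) ≤ 0 := by push_cast; linarith
          exact_mod_cast this
        have i3 : -(b:ℤ) < z2 - cc := by
          have : ((-(b:ℤ)):ℝ) < ((z2 - cc : ℤ):ℝ) := by push_cast; linarith
          exact_mod_cast this
        have i4 : z2 - cc < (d:ℤ) := by
          have : ((z2 - cc : ℤ):ℝ) < ((d:ℤ):ℝ) := by push_cast; linarith
          exact_mod_cast this
        refine ⟨n, cc, hdvd, by omega, by omega, by omega, by omega, ?_, ?_⟩ <;>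
          (rw [abs_le]; omega)
      · -- middle-right : variant (1, 1)
        obtain ⟨n, cc, hdvd, s, t, hs0, hs1, ht0, ht1, hx, hy⟩ :=
          corePar F G a b c d hF hdet hu hw 1 1 (Or.inl rfl) (Or.inl rfl) z1 z2
        push_cast at hx hy
        have k1 : s * a < a := by nlinarith
        have k2 : t * c < c := by nlinarith
        have k3 : 0 ≤ s * a := by positivity
        have k4 : 0 ≤ t * c := by positivity
        have k5 : s * b < b := by nlinarith
        have k6 : t * d < d := by nlinarith
        have k7 : 0 ≤ s * b := by positivity
        have k8 : 0 ≤ t * d := by positivity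
        have i1 : (0:ℤ) ≤ z1 - n := by
          have : (0:ℝ) ≤ ((z1 - n : ℤ):ℝ) := by push_cast; linarith
          exact_mod_cast this
        have i2 : z1 - n < (a:ℤ) + c := by
          have : ((z1 - n : ℤ):ℝ) < ((a:ℤ):ℝ) + ((c:ℤ):ℝ) := by push_cast; linarith
          exact_mod_cast this
        have i3 : -(d:ℤ) < z2 - cc := by
          have : ((-(d:ℤ)):ℝ) < ((z2 - cc : ℤ):ℝ) := by push_cast; linarith
          exact_mod_cast this
        have i4 : z2 - cc < (b:ℤ) := by
          have : ((z2 - cc : ℤ):ℝ) < ((b:ℤ):ℝ) := by push_cast; linarith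
          exact_mod_cast this
        refine ⟨n, cc, hdvd, by omega, by omega, by omega, by omega, ?_, ?_⟩ <;>
          (rw [abs_le]; omega)



/-- The Fibonacci lattice point set
`F_m = { (n/F_m, {n F_{m−1}/F_m}) : n = 0, …, F_m − 1 }`. -/
def fibLattPts (m : ℕ) : Set (Fin 2 → ℝ) :=
  {x | ∃ n : ℕ, n < Nat.fib m ∧
    x = ![(n : ℝ) / Nat.fib m, Int.fract ((n : ℝ) * Nat.fib (m - 1) / Nat.fib m)]}

set_option maxHeartbeats 2000000 in
/-- The Fibonacci lattice point set `F_m` has mesh ratio `ρ_∞` bounded by `12`,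
uniformly in `m ≥ 3`. -/
theorem meshRatio_fibLattPts_le
    (m : ℕ) (hm : 3 ≤ m) :
    covRadInf (fibLattPts m) (Set.Icc (0 : Fin 2 → ℝ) 1) / sepRadInf (fibLattPts m)
      ≤ 12 := by
  obtain ⟨p, t, rfl, ht, hpt⟩ : ∃ p t, m = p + t + 2 ∧ 1 ≤ t ∧ (p = t ∨ t = p + 1) := by
    rcases Nat.even_or_odd m with ⟨k, hk⟩ | ⟨k, hk⟩
    · exact ⟨k-1, k-1, by omega, by omega, Or.inl rfl⟩
    · exact ⟨k-1, k, by omega, by omega, Or.inr (by omega)⟩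
  obtain ⟨a, b, c, d, ha, hb, hc, hd, hdet, hu, hw, hac, hbd, hM1, hM2⟩ := exists_abcd p t ht
  set S : ℕ := min (fib (p+2)) (fib (t+1)) with hSdefn
  set F : ℕ := fib (p+t+2) with hFdefn
  set G : ℕ := fib (p+t+1) with hGdefn
  have hSpos : 0 < S := lt_min (Nat.fib_pos.mpr (by omega)) (Nat.fib_pos.mpr (by omega))
  have hFpos : 0 < F := Nat.fib_pos.mpr (by omega)
  have hF2 : 2 ≤ F := by
    calc 2 = fib 3 := rfl
    _ ≤ F := Nat.fib_mono (by omega)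
  have hS3 : S ≤ a + c := le_trans (min_le_left _ _) (by omega)
  have hS4 : S ≤ b + d := le_trans (min_le_right _ _) (by omega)
  have hFR : (0:ℝ) < F := by exact_mod_cast hFpos
  have hSR : (0:ℝ) < S := by exact_mod_cast hSpos
  have hsub : p + t + 2 - 1 = p + t + 1 := by omega
  have hvec : ∀ (u v u' v' : ℝ), u = u' → v = v' → (![u, v] : Fin 2 → ℝ) = ![u', v'] := by
    intro u v u' v' h1 h2; rw [h1, h2]
  -- membership helper
  have hmem : ∀ n cc : ℤ, (F:ℤ) ∣ cc - n * G → 0 ≤ n → n ≤ (F:ℤ) - 1 → 0 ≤ cc → cc ≤ (F:ℤ) - 1 →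
      (![(n:ℝ)/F, (cc:ℝ)/F] : Fin 2 → ℝ) ∈ fibLattPts (p+t+2) := by
    intro n cc hdvd hn0 hn1 hc0 hc1
    have hnt : ((n.toNat : ℕ) : ℝ) = ((n:ℤ):ℝ) := by exact_mod_cast Int.toNat_of_nonneg hn0
    refine ⟨n.toNat, ?_, ?_⟩
    · have h' : (n.toNat : ℤ) = n := Int.toNat_of_nonneg hn0
      omega
    · rw [hsub]
      refine hvec _ _ _ _ ?_ ?_
      · rw [hnt]
      · obtain ⟨k, hk⟩ := hdvd
        have hkR : (cc:ℝ) - (n:ℝ) * G = (F:ℝ) * k := by exact_mod_cast hk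
        have h2 : ((n.toNat:ℕ):ℝ) * G / F = (cc:ℝ)/F - (k:ℝ) := by
          rw [hnt]; field_simp; linarith
        have hlt : (cc:ℝ) < F := by exact_mod_cast (show cc < (F:ℤ) by omega)
        have hfr : Int.fract ((cc:ℝ)/F) = (cc:ℝ)/F :=
          Int.fract_eq_self.mpr ⟨by positivity, by rwa [div_lt_one hFR]⟩
        rw [h2, show (cc:ℝ)/F - (k:ℝ) = (cc:ℝ)/F - ((k:ℤ):ℝ) from rfl, Int.fract_sub_intCast, hfr]
  -- covering key
  have key : ∀ x : Fin 2 → ℝ, x ∈ Set.Icc (0 : Fin 2 → ℝ) 1 →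
      ∃ q ∈ fibLattPts (p+t+2), dist x q ≤ 6*(S:ℝ)/F := by
    intro x hx
    rw [Set.mem_Icc] at hx
    have hx0 : ∀ i, 0 ≤ x i := fun i => hx.1 i
    have hx1 : ∀ i, x i ≤ 1 := fun i => hx.2 i
    by_cases hbig : 8 ≤ p + t + 2
    · -- large case
      obtain ⟨hW1, hW2, hR1, hR2⟩ :
          (a+c+1 ≤ 6*S) ∧ (b+d+2 ≤ 6*S) ∧ (2*(a+c)+1 ≤ F) ∧ (2*(b+d)+1 ≤ F) := by
        rcases hpt with rfl | rfl
        · have hnum := numEven p (by omega)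
          have hSval : S = fib (p+1) := by
            rw [hSdefn, min_eq_right (Nat.fib_mono (by omega))]
          have hFval : F = fib (p+p+2) := hFdefn
          omega
        · have hnum := numOdd p (by omega)
          simp only [show p+1+1 = p+2 from rfl] at hbd
          have hSval : S = fib (p+2) := by
            rw [hSdefn, show p+1+1 = p+2 from rfl, min_self]
          have hFval : F = fib (p+p+3) := by
            rw [hFdefn, show p + (p+1) + 2 = p+p+3 from by ring]
          omega
      have hF2z : (2:ℤ) ≤ (F:ℤ) := by exact_mod_cast hF2
      have hzmk : ∀ u : ℝ, 0 ≤ u → u ≤ 1 →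
          0 ≤ min ⌊u * F⌋ ((F:ℤ) - 1) ∧ min ⌊u * F⌋ ((F:ℤ) - 1) ≤ (F:ℤ) - 1 ∧
          |u * F - (min ⌊u * F⌋ ((F:ℤ) - 1) : ℤ)| ≤ 1 := by
        intro u hu0 hu1
        have huF0 : 0 ≤ u * F := by positivity
        have huF1 : u * F ≤ F := by nlinarith
        refine ⟨le_min (Int.floor_nonneg.mpr huF0) (by omega), min_le_right _ _, ?_⟩
        rcases le_total (⌊u * F⌋) ((F:ℤ) - 1) with h | h
        · rw [min_eq_left h, abs_le]
          constructor
          · linarith [Int.floor_le (u * F)]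
          · linarith [Int.lt_floor_add_one (u * F)]
        · rw [min_eq_right h, abs_le]
          have h1 : ((F:ℤ) - 1 : ℝ) ≤ ⌊u * F⌋ := by exact_mod_cast h
          have h2 := Int.floor_le (u * F)
          push_cast
          push_cast at h1
          constructor <;> linarith
      obtain ⟨hz10, hz11, ha1⟩ := hzmk (x 0) (hx0 0) (hx1 0)
      obtain ⟨hz20, hz21, ha2⟩ := hzmk (x 1) (hx0 1) (hx1 1)
      obtain ⟨n, cc, hdvd, hn0, hn1, hc0, hc1, hb1, hb2⟩ :=
        coreCov F G a b c d S hFpos ha hb hc hd hdet hu hw hW1 hW2 hR1 hR2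
          (min ⌊x 0 * F⌋ ((F:ℤ) - 1)) (min ⌊x 1 * F⌋ ((F:ℤ) - 1)) hz10 hz11 hz20 hz21
      refine ⟨![(n:ℝ)/F, (cc:ℝ)/F], hmem n cc hdvd hn0 hn1 hc0 hc1, ?_⟩
      rw [dist_pi_le_iff (by positivity)]
      have habs : ∀ (u : ℝ) (z w : ℤ), |u * F - z| ≤ 1 → |z - w| ≤ 6*(S:ℤ) - 1 →
          dist u ((w:ℝ)/F) ≤ 6*(S:ℝ)/F := by
        intro u z w h1 h2
        have h2R : |(z:ℝ) - (w:ℝ)| ≤ 6*(S:ℝ) - 1 := by exact_mod_cast h2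
        rw [Real.dist_eq]
        have hrw : u - (w:ℝ)/F = (u * F - w)/F := by field_simp
        rw [hrw, abs_div, abs_of_pos hFR]
        gcongr
        calc |u * F - (w:ℝ)| ≤ |u * F - (z:ℝ)| + |(z:ℝ) - w| := abs_sub_le _ _ _
          _ ≤ 1 + (6*(S:ℝ) - 1) := by linarith
          _ = 6*(S:ℝ) := by ring
      intro i; fin_cases i
      · simpa using habs (x 0) _ n ha1 hb1
      · simpa using habs (x 1) _ cc ha2 hb2
    · -- small case
      have hsmall : F ≤ 6 * S := by
        rw [hFdefn, hSdefn]
        rcases hpt with rfl | rfl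
        · have hub : p ≤ 2 := by omega
          interval_cases p <;> decide
        · have hub : p ≤ 2 := by omega
          interval_cases p <;> decide
      have h1le : (1:ℝ) ≤ 6*(S:ℝ)/F := by
        rw [le_div_iff₀ hFR]
        have : (F:ℝ) ≤ 6*(S:ℝ) := by exact_mod_cast hsmall
        linarith
      refine ⟨_, hmem 0 0 (by simp) le_rfl (by omega) le_rfl (by omega), ?_⟩
      rw [dist_pi_le_iff (by positivity)]
      have hd0 : ∀ u : ℝ, 0 ≤ u → u ≤ 1 → dist u (((0:ℤ):ℝ)/F) ≤ 6*(S:ℝ)/F := by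
        intro u h0 h1
        rw [show ((0:ℤ):ℝ)/F = 0 by simp, Real.dist_eq, sub_zero, abs_of_nonneg h0]
        linarith
      intro i; fin_cases i
      · simpa using hd0 (x 0) (hx0 0) (hx1 0)
      · simpa using hd0 (x 1) (hx0 1) (hx1 1)
  -- covering radius bound
  have hcov : covRadInf (fibLattPts (p+t+2)) (Set.Icc (0:Fin 2 → ℝ) 1) ≤ 6*(S:ℝ)/F := by
    haveI : Nonempty (Set.Icc (0:Fin 2 → ℝ) 1) :=
      ⟨⟨0, Set.mem_Icc.mpr ⟨le_rfl, zero_le_one⟩⟩⟩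
    apply ciSup_le
    rintro ⟨x, hx⟩
    obtain ⟨q, hq, hdq⟩ := key x hx
    exact ciInf_le_of_le ⟨0, by rintro r ⟨y, rfl⟩; exact dist_nonneg⟩ ⟨q, hq⟩ hdq
  -- separation bound
  have hGF : (G:ℤ) ≤ (F:ℤ) - 1 := by
    have : fib (p+t+1) < fib (p+t+2) := Nat.fib_lt_fib_succ (n := p+t+1) (by omega)
    have h2 : G < F := by rw [hGdefn, hFdefn]; exact this
    omega
  have hsinf : (S:ℝ)/F ≤
      sInf {r : ℝ | ∃ x ∈ fibLattPts (p+t+2), ∃ y ∈ fibLattPts (p+t+2), x ≠ y ∧ r = dist x y} := by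
    apply le_csInf
    · -- nonempty
      have m0 := hmem 0 0 (by simp) le_rfl (by omega) le_rfl (by omega)
      have m1 := hmem 1 (G:ℤ) (by simp) (by norm_num) (by omega) (by positivity) hGF
      refine ⟨_, _, m0, _, m1, ?_, rfl⟩
      intro h
      have h0 := congrFun h 0
      simp only [Matrix.cons_val_zero, Int.cast_zero, Int.cast_one, zero_div] at h0
      rw [eq_comm, div_eq_zero_iff] at h0
      rcases h0 with h0 | h0
      · norm_num at h0
      · exact hFR.ne' h0
    · rintro r ⟨x, hx, y, hy, hxy, rfl⟩
      obtain ⟨n1, hn1, rfl⟩ := hx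
      obtain ⟨n2, hn2, rfl⟩ := hy
      have hne : n1 ≠ n2 := by rintro rfl; exact hxy rfl
      have hΔ : ((n1:ℤ) - n2) ≠ 0 := by
        intro h; exact hne (by exact_mod_cast sub_eq_zero.mp h)
      rw [hsub]
      have hEx : ∃ cc : ℤ,
          (Int.fract ((n1:ℝ) * (fib (p+t+1) : ℕ) / F) -
            Int.fract ((n2:ℝ) * (fib (p+t+1) : ℕ) / F) = (cc:ℝ)/F) ∧
          ((F:ℤ) ∣ cc - ((n1:ℤ) - (n2:ℤ)) * G) := by
        refine ⟨(n1:ℤ)*G - (n2:ℤ)*G -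
          F*(⌊(n1:ℝ) * (fib (p+t+1) : ℕ) / F⌋ - ⌊(n2:ℝ) * (fib (p+t+1) : ℕ) / F⌋), ?_,
          ⟨-(⌊(n1:ℝ) * (fib (p+t+1) : ℕ) / F⌋ - ⌊(n2:ℝ) * (fib (p+t+1) : ℕ) / F⌋), by
            rw [hGdefn]; push_cast; ring⟩⟩
        simp only [Int.fract, hGdefn]
        push_cast
        field_simp
        ring
      obtain ⟨cc, hccq, hccdvd⟩ := hEx
      have hmax := coreSep F G a b c d S hFpos ha hb hc hd hdet hu hw hM1 hM2 hS3 hS4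
        ((n1:ℤ) - n2) cc hΔ hccdvd
      rcases le_max_iff.mp hmax with hcase | hcase
      · refine le_trans ?_ (dist_le_pi_dist _ _ 0)
        simp only [Matrix.cons_val_zero, Real.dist_eq]
        rw [show (n1:ℝ)/F - (n2:ℝ)/F = ((((n1:ℤ)-(n2:ℤ)) : ℤ):ℝ)/F from by push_cast; ring,
          abs_div, abs_of_pos hFR]
        have hS' : (S:ℝ) ≤ |((((n1:ℤ)-(n2:ℤ)):ℤ):ℝ)| := by exact_mod_cast hcase
        gcongr
      · refine le_trans ?_ (dist_le_pi_dist _ _ 1)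
        simp only [Matrix.cons_val_one, Matrix.cons_val_zero, Matrix.head_cons, Real.dist_eq]
        rw [hccq, abs_div, abs_of_pos hFR]
        have hS' : (S:ℝ) ≤ |((cc:ℤ):ℝ)| := by exact_mod_cast hcase
        gcongr
  have hsepB : (S:ℝ)/(2*F) ≤ sepRadInf (fibLattPts (p+t+2)) := by
    have h2 : (S:ℝ)/(2*F) = ((S:ℝ)/F)/2 := by ring
    rw [sepRadInf, h2]
    linarith [hsinf]
  have hsp : 0 < sepRadInf (fibLattPts (p+t+2)) :=
    lt_of_lt_of_le (by positivity) hsepB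
  rw [div_le_iff₀ hsp]
  calc covRadInf (fibLattPts (p+t+2)) (Set.Icc (0:Fin 2 → ℝ) 1) ≤ 6*(S:ℝ)/F := hcov
    _ = 12 * ((S:ℝ)/(2*F)) := by ring
    _ ≤ 12 * sepRadInf (fibLattPts (p+t+2)) := by linarith [hsepB]
end
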